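/- arXiv:0710.2307 — 11 statements merged into one kernel-verified Lean document; each statement's English description precedes it below -/
import Mathlib

section
/- For all real numbers u, v ≥ 0 and 1 < p ≤ 2 with q = p/(p-1), one has (1/q)(u^{p/2} - v^{q/2})² ≤ u^p/p + v^q/q - uv. -/
/-!
Put `a = u^(p/2)` and `b = v^(q/2)`, so that `u^p = a²` and `v^q = b²`. Since `1/p + 1/q = 1`,
the claim is equivalent to `uv ≤ (1 - 2/q) a² + (2/q) ab`. Writing `uv = a · a^(1-2/q) b^(2/q)`,
this is the weighted AM-GM inequality with weights `1 - 2/q` and `2/q`, which are nonnegative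
exactly when `q ≥ 2`.
-/

namespace Real.HolderConjugate

variable {p q : ℝ}

lemma two_le_of_le_two (hpq : p.HolderConjugate q) (hp : p ≤ 2) : 2 ≤ q := by
  have hinv : q⁻¹ ≤ 2⁻¹ := by
    linarith [inv_anti₀ hpq.pos hp, hpq.inv_add_inv_eq_one, (by norm_num : (2 : ℝ)⁻¹ + 2⁻¹ = 1)]
  exact (inv_le_inv₀ hpq.symm.pos two_pos).1 hinv

lemma mul_le_rpow_half_mul (hpq : p.HolderConjugate q) (hq : 2 ≤ q) {u v : ℝ}
    (hu : 0 ≤ u) (hv : 0 ≤ v) :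
    u * v ≤ u ^ (p / 2) * ((1 - 2 / q) * u ^ (p / 2) + 2 / q * v ^ (q / 2)) := by
  have hq0 := hpq.symm.pos
  have hu_eq : u = u ^ (p / 2) * (u ^ (p / 2)) ^ (1 - 2 / q) := by
    have hexp : p / 2 + p / 2 * (1 - 2 / q) = 1 := by
      have hinv := hpq.inv_add_inv_eq_one
      have hp0 := hpq.ne_zero
      field_simp at hinv ⊢
      linarith
    -- `rpow_add'` rather than `rpow_add`: the exponents sum to `1 ≠ 0`, so `u = 0` is allowed.
    rw [← rpow_mul hu, ← rpow_add' hu (by rw [hexp]; exact one_ne_zero), hexp, rpow_one]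
  have hv_eq : v = (v ^ (q / 2)) ^ (2 / q) := by
    rw [← rpow_mul hv, div_mul_div_cancel₀ two_ne_zero, div_self hq0.ne', rpow_one]
  have amgm := geom_mean_le_arith_mean2_weighted (p₁ := u ^ (p / 2)) (p₂ := v ^ (q / 2))
    (sub_nonneg.2 <| (div_le_one hq0).2 hq) (by positivity) (by positivity) (by positivity)
    (sub_add_cancel 1 (2 / q))
  calc u * v = u ^ (p / 2) * ((u ^ (p / 2)) ^ (1 - 2 / q) * (v ^ (q / 2)) ^ (2 / q)) := by
        nth_rw 1 [hu_eq, hv_eq]; ring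
    _ ≤ _ := mul_le_mul_of_nonneg_left amgm (by positivity)

end Real.HolderConjugate

lemma Real.rpow_div_two_sq {x : ℝ} (hx : 0 ≤ x) (y : ℝ) : (x ^ (y / 2)) ^ 2 = x ^ y := by
  rw [← rpow_natCast, ← rpow_mul hx]
  norm_num

theorem stmt_0 (u v p q : ℝ) (hu : 0 ≤ u) (hv : 0 ≤ v)
    (hp1 : 1 < p) (hp2 : p ≤ 2) (hq : q = p / (p - 1)) :
    (1 / q) * (u ^ (p / 2) - v ^ (q / 2)) ^ 2 ≤ u ^ p / p + v ^ q / q - u * v := by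
  have hpq : p.HolderConjugate q := (Real.holderConjugate_iff_eq_conjExponent hp1).2 hq
  have key := hpq.mul_le_rpow_half_mul (hpq.two_le_of_le_two hp2) hu hv
  have hinv : 1 / p + 1 / q = 1 := by simpa only [one_div] using hpq.inv_add_inv_eq_one
  rw [← Real.rpow_div_two_sq hu p, ← Real.rpow_div_two_sq hv q]
  set a := u ^ (p / 2)
  set b := v ^ (q / 2)
  calc 1 / q * (a - b) ^ 2 = a ^ 2 / p + b ^ 2 / q - a * ((1 - 2 / q) * a + 2 / q * b) := by
        linear_combination (-a ^ 2) * hinv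
    _ ≤ a ^ 2 / p + b ^ 2 / q - u * v := by linarith
end

section
/- For all real numbers u, v ≥ 0 and 1 < p ≤ 2 with q = p/(p-1), one has u^p/p + v^q/q - uv ≤ (1/p)(u^{p/2} - v^{q/2})². -/
/-!
Substitute `x = u ^ (p / 2)` and `y = v ^ (q / 2)`, so that `u ^ p = x ^ 2`, `v ^ q = y ^ 2` and
`u * v = x ^ a * y ^ (2 - a)` with `a = 2 / p ≥ 1`. After multiplying by `p` the inequality becomes
`a * x * y + (1 - a) * y ^ 2 ≤ x ^ a * y ^ (2 - a)`, which is Bernoulli's inequality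
`1 + a * (t - 1) ≤ t ^ a` at `t = x / y`, multiplied by `y ^ 2`.
-/

open Real

namespace Real

theorem mul_mul_add_one_sub_mul_sq_le_rpow_mul_rpow {a x y : ℝ} (ha : 1 ≤ a) (hx : 0 ≤ x)
    (hy : 0 ≤ y) : a * x * y + (1 - a) * y ^ 2 ≤ x ^ a * y ^ (2 - a) := by
  rcases hy.eq_or_lt with rfl | hy
  · simpa using mul_nonneg (rpow_nonneg hx a) (rpow_nonneg le_rfl (2 - a))
  have bernoulli : 1 + a * (x / y - 1) ≤ (x / y) ^ a := by
    simpa using one_add_mul_self_le_rpow_one_add (s := x / y - 1)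
      (by linarith [div_nonneg hx hy.le]) ha
  calc a * x * y + (1 - a) * y ^ 2 = (1 + a * (x / y - 1)) * y ^ 2 := by field_simp; ring
    _ ≤ (x / y) ^ a * y ^ 2 := by gcongr
    _ = x ^ a * y ^ (2 - a) := by
      rw [div_rpow hx hy.le, rpow_sub hy, rpow_two]
      field_simp

theorem rpow_half_sq {u : ℝ} (hu : 0 ≤ u) (r : ℝ) : (u ^ (r / 2)) ^ 2 = u ^ r := by
  rw [← rpow_mul_natCast hu]
  norm_num

end Real

theorem stmt_1 (u v p q : ℝ) (hu : 0 ≤ u) (hv : 0 ≤ v)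
    (hp1 : 1 < p) (hp2 : p ≤ 2) (hq : q = p / (p - 1)) :
    u ^ p / p + v ^ q / q - u * v ≤ (1 / p) * (u ^ (p / 2) - v ^ (q / 2)) ^ 2 := by
  have hp0 : 0 < p := by linarith
  have hq0 : 0 < q := by
    rw [hq]
    exact div_pos hp0 (by linarith)
  have hq_inv : 1 / q = 1 - 1 / p := by
    rw [hq]
    field_simp [(by linarith : p - 1 ≠ 0)]
  have ha : 1 ≤ (p / 2)⁻¹ := by
    rw [one_le_inv₀ (by positivity)]
    linarith
  have hb : 2 - (p / 2)⁻¹ = (q / 2)⁻¹ := by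
    rw [inv_div, inv_div, div_eq_mul_one_div 2 q, hq_inv]
    ring
  have key := mul_mul_add_one_sub_mul_sq_le_rpow_mul_rpow ha (rpow_nonneg hu (p / 2))
    (rpow_nonneg hv (q / 2))
  rw [hb, rpow_rpow_inv hu (by positivity), rpow_rpow_inv hv (by positivity),
    inv_div] at key
  rw [← rpow_half_sq hu p, ← rpow_half_sq hv q, div_eq_mul_one_div _ q, hq_inv]
  linear_combination key
end

section
/- Let (X, μ) be a measure space, 1 < p ≤ 2, q = p/(p-1), f ∈ L^p and g ∈ L^q with ‖f‖_p > 0 and ‖g‖_q > 0. Then ‖fg‖_1 ≤ ‖f‖_p‖g‖_q·(1 - (1/q)·‖|f|^{p/2}/‖f‖_p^{p/2} - |g|^{q/2}/‖g‖_q^{q/2}‖_2²). -/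
/-!
Refined Young inequality: for `a, b ≥ 0` put `u = a^(p/2)`, `v = b^(q/2)`. Since `q ≥ 2`,
`a b = (u²)^(1 - 2/q) (u v)^(2/q) ≤ (1 - 2/q) u² + (2/q) u v = u²/p + v²/q - (u - v)²/q`
by weighted AM-GM. Applied to `a = |f|/‖f‖_p`, `b = |g|/‖g‖_q` and integrated, the first two
terms contribute `1/p + 1/q = 1`.
-/

open MeasureTheory

namespace Real

theorem mul_le_add_sub_sq_rpow_half {p q a b : ℝ} (hpq : p.HolderConjugate q) (hp2 : p ≤ 2)
    (ha : 0 ≤ a) (hb : 0 ≤ b) :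
    a * b ≤ a ^ p / p + b ^ q / q - (1 / q) * (a ^ (p / 2) - b ^ (q / 2)) ^ 2 := by
  have hq0 : 0 < q := hpq.symm.pos
  have hq2 : 2 ≤ q := by
    rw [hpq.conjugate_eq, le_div_iff₀ hpq.sub_one_pos]; linarith
  set u := a ^ (p / 2)
  set v := b ^ (q / 2)
  have hu : 0 ≤ u := rpow_nonneg ha _
  have hv : 0 ≤ v := rpow_nonneg hb _
  have hap : a ^ p = u ^ 2 := by rw [← rpow_mul_natCast ha]; norm_num
  have hbq : b ^ q = v ^ 2 := by rw [← rpow_mul_natCast hb]; norm_num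
  have hab : a * b = (u ^ 2) ^ (1 - 2 / q) * (u * v) ^ (2 / q) := by
    have hexp : p * (1 - 2 / q) + p / q = 1 := by
      field_simp
      linear_combination hpq.sub_one_mul_conj
    rw [← hap, ← rpow_mul ha, mul_rpow hu hv, ← rpow_mul ha, ← rpow_mul hb,
      show q / 2 * (2 / q) = 1 by field_simp, rpow_one, show p / 2 * (2 / q) = p / q by ring,
      ← mul_assoc, ← rpow_add' ha (by rw [hexp]; exact one_ne_zero), hexp, rpow_one]
  have hamgm : a * b ≤ (1 - 2 / q) * u ^ 2 + 2 / q * (u * v) := by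
    rw [hab]
    refine geom_mean_le_arith_mean2_weighted ?_ (by positivity) (sq_nonneg u)
      (mul_nonneg hu hv) (by ring)
    rw [sub_nonneg, div_le_one hq0]
    exact hq2
  have hpq' : 1 / p + 1 / q = 1 := by simpa using hpq.inv_add_inv_eq_one
  rw [hap, hbq]
  linear_combination hamgm - u ^ 2 * hpq'

theorem abs_mul_le_mul_mul_add_sub_sq {p q A B : ℝ} (hpq : p.HolderConjugate q) (hp2 : p ≤ 2)
    (hA : 0 < A) (hB : 0 < B) (x y : ℝ) :
    |x * y| ≤ A * B * (|x| ^ p / A ^ p / p + |y| ^ q / B ^ q / q -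
      (1 / q) * (|x| ^ (p / 2) / A ^ (p / 2) - |y| ^ (q / 2) / B ^ (q / 2)) ^ 2) := by
  have h := mul_le_add_sub_sq_rpow_half hpq hp2
    (div_nonneg (abs_nonneg x) hA.le) (div_nonneg (abs_nonneg y) hB.le)
  simp only [div_rpow (abs_nonneg _) hA.le, div_rpow (abs_nonneg _) hB.le] at h
  rwa [abs_mul, ← div_le_iff₀' (mul_pos hA hB), ← div_mul_div_comm]

end Real

namespace MeasureTheory

variable {X E : Type*} [MeasurableSpace X] {μ : Measure X} [NormedAddCommGroup E] {p : ℝ}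

theorem MemLp.integral_norm_rpow_eq {f : X → E} (hp : 0 < p)
    (hf : MemLp f (ENNReal.ofReal p) μ) :
    ∫ x, ‖f x‖ ^ p ∂μ = (eLpNorm f (ENNReal.ofReal p) μ).toReal ^ p := by
  rw [hf.eLpNorm_eq_integral_rpow_norm (by simpa using hp) ENNReal.ofReal_ne_top,
    ENNReal.toReal_ofReal hp.le, ENNReal.toReal_ofReal (by positivity),
    ← Real.rpow_mul (integral_nonneg fun _ => by positivity), inv_mul_cancel₀ hp.ne',
    Real.rpow_one]

theorem MemLp.integrable_norm_rpow_ofReal {f : X → E} (hp : 0 < p)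
    (hf : MemLp f (ENNReal.ofReal p) μ) : Integrable (fun x => ‖f x‖ ^ p) μ := by
  simpa [ENNReal.toReal_ofReal hp.le] using
    hf.integrable_norm_rpow (by simpa using hp) ENNReal.ofReal_ne_top

theorem MemLp.norm_rpow_half {f : X → E} (hp : 0 < p) (hf : MemLp f (ENNReal.ofReal p) μ) :
    MemLp (fun x => ‖f x‖ ^ (p / 2)) 2 μ := by
  have h := hf.norm_rpow_div (ENNReal.ofReal (p / 2))
  rwa [ENNReal.toReal_ofReal (by positivity), ← ENNReal.ofReal_div_of_pos (by positivity),
    div_div_cancel₀ hp.ne', ENNReal.ofReal_ofNat] at h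

theorem MemLp.integral_sq_eq {f : X → ℝ} (hf : MemLp f 2 μ) :
    ∫ x, f x ^ 2 ∂μ = (eLpNorm f 2 μ).toReal ^ 2 := by
  have h := MemLp.integral_norm_rpow_eq two_pos (by rwa [ENNReal.ofReal_ofNat])
  simpa [Real.norm_eq_abs, sq_abs] using h

end MeasureTheory

theorem stmt_4 {X : Type*} [MeasurableSpace X] (μ : Measure X)
    (p q : ℝ) (hp1 : 1 < p) (hp2 : p ≤ 2) (hq : q = p / (p - 1))
    (f g : X → ℝ)
    (hf : MemLp f (ENNReal.ofReal p) μ) (hg : MemLp g (ENNReal.ofReal q) μ)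
    (hf0 : 0 < (eLpNorm f (ENNReal.ofReal p) μ).toReal)
    (hg0 : 0 < (eLpNorm g (ENNReal.ofReal q) μ).toReal) :
    (eLpNorm (fun x => f x * g x) 1 μ).toReal ≤
      (eLpNorm f (ENNReal.ofReal p) μ).toReal * (eLpNorm g (ENNReal.ofReal q) μ).toReal *
        (1 - (1 / q) *
          (eLpNorm (fun x =>
              |f x| ^ (p / 2) / (eLpNorm f (ENNReal.ofReal p) μ).toReal ^ (p / 2) -
              |g x| ^ (q / 2) / (eLpNorm g (ENNReal.ofReal q) μ).toReal ^ (q / 2)) 2 μ).toReal ^ 2) := by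
  have hpq : p.HolderConjugate q := (Real.holderConjugate_iff_eq_conjExponent hp1).2 hq
  set A := (eLpNorm f (ENNReal.ofReal p) μ).toReal
  set B := (eLpNorm g (ENNReal.ofReal q) μ).toReal
  set h : X → ℝ := fun x => |f x| ^ (p / 2) / A ^ (p / 2) - |g x| ^ (q / 2) / B ^ (q / 2)
  have hfg : Integrable (fun x => f x * g x) μ :=
    haveI := hpq.ennrealOfReal
    hf.integrable_mul hg
  have hfp : ∫ x, |f x| ^ p ∂μ = A ^ p := hf.integral_norm_rpow_eq hpq.pos
  have hgq : ∫ x, |g x| ^ q ∂μ = B ^ q := hg.integral_norm_rpow_eq hpq.symm.pos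
  have hh : MemLp h 2 μ := by
    have := ((hf.norm_rpow_half hpq.pos).mul_const (A ^ (p / 2))⁻¹).sub
      ((hg.norm_rpow_half hpq.symm.pos).mul_const (B ^ (q / 2))⁻¹)
    convert this using 1
    ext x
    simp only [h, Pi.sub_apply, div_eq_mul_inv, Real.norm_eq_abs]
  have hF : Integrable (fun x => |f x| ^ p / A ^ p / p) μ :=
    ((hf.integrable_norm_rpow_ofReal hpq.pos).div_const _).div_const _
  have hG : Integrable (fun x => |g x| ^ q / B ^ q / q) μ :=
    ((hg.integrable_norm_rpow_ofReal hpq.symm.pos).div_const _).div_const _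
  have hH : Integrable (fun x => 1 / q * h x ^ 2) μ := hh.integrable_sq.const_mul _
  calc (eLpNorm (fun x => f x * g x) 1 μ).toReal
      = ∫ x, |f x * g x| ∂μ := by
        rw [toReal_eLpNorm hfg.aestronglyMeasurable,
          lpNorm_one_eq_integral_norm hfg.aestronglyMeasurable]
        rfl
    _ ≤ ∫ x, A * B * (|f x| ^ p / A ^ p / p + |g x| ^ q / B ^ q / q - 1 / q * h x ^ 2) ∂μ :=
        integral_mono hfg.abs (((hF.fun_add hG).sub hH).const_mul _)
          fun x => Real.abs_mul_le_mul_mul_add_sub_sq hpq hp2 hf0 hg0 (f x) (g x)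
    _ = A * B * (1 / p + 1 / q - 1 / q * (eLpNorm h 2 μ).toReal ^ 2) := by
        rw [integral_const_mul, integral_sub (hF.fun_add hG) hH, integral_add hF hG,
          integral_div, integral_div, integral_div, integral_div, integral_const_mul, hfp, hgq,
          hh.integral_sq_eq, div_self (Real.rpow_pos_of_pos hf0 p).ne',
          div_self (Real.rpow_pos_of_pos hg0 q).ne']
    _ = A * B * (1 - 1 / q * (eLpNorm h 2 μ).toReal ^ 2) := by
        simp only [one_div, hpq.inv_add_inv_eq_one]
end

section
/- Let (X, μ) be a measure space, 1 < p ≤ 2, q = p/(p-1), f ∈ L^p and g ∈ L^q with ‖f‖_p > 0 and ‖g‖_q > 0. Then ‖f‖_p‖g‖_q·(1 - (1/p)·‖|f|^{p/2}/‖f‖_p^{p/2} - |g|^{q/2}/‖g‖_q^{q/2}‖_2²) ≤ ‖fg‖_1. -/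
/-!
Put `α = 2 / p ∈ [1, 2)`. Bernoulli's inequality `r ^ α ≥ 1 + α (r - 1)` at `r = a / b` gives
`(1 - α) b² + α a b ≤ a ^ α b ^ (2 - α)`. At `a = φ x`, `b = ψ x`, the normalized half powers
`φ = |f| ^ (p/2) / ‖f‖_p ^ (p/2)` and `ψ = |g| ^ (q/2) / ‖g‖_q ^ (q/2)`, the right side is
`|f x g x| / (‖f‖_p ‖g‖_q)`, because `α p / 2 = 1 = (2 - α) q / 2`. Integrating, with
`∫ φ² = ∫ ψ² = 1` and `‖φ - ψ‖₂² = 2 - 2 ∫ φ ψ`, the left side becomes `1 - ‖φ - ψ‖₂² / p`.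
-/

open MeasureTheory

lemma one_sub_mul_sq_add_mul_le_rpow_mul_rpow {α a b : ℝ} (hα : 1 ≤ α) (ha : 0 ≤ a)
    (hb : 0 ≤ b) : (1 - α) * b ^ 2 + α * (a * b) ≤ a ^ α * b ^ (2 - α) := by
  rcases hb.eq_or_lt with rfl | hb
  · simpa using by positivity
  have bernoulli : 1 + α * (a / b - 1) ≤ (a / b) ^ α := by
    have hr : -1 ≤ a / b - 1 := by linarith [div_nonneg ha hb.le]
    simpa using one_add_mul_self_le_rpow_one_add hr hα
  calc (1 - α) * b ^ 2 + α * (a * b) = b ^ 2 * (1 + α * (a / b - 1)) := by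
        field_simp; ring
    _ ≤ b ^ 2 * (a / b) ^ α := by gcongr
    _ = a ^ α * b ^ (2 - α) := by
        rw [Real.div_rpow ha hb.le, Real.rpow_sub hb, Real.rpow_two]; field_simp

lemma Real.HolderConjugate.one_sub_two_div_mul_add_le_mul {p q u v : ℝ}
    (hpq : p.HolderConjugate q) (hp2 : p ≤ 2) (hu : 0 ≤ u) (hv : 0 ≤ v) :
    (1 - 2 / p) * (v ^ (q / 2)) ^ 2 + 2 / p * (u ^ (p / 2) * v ^ (q / 2)) ≤ u * v := by
  have hp := hpq.pos
  have key := one_sub_mul_sq_add_mul_le_rpow_mul_rpow (α := 2 / p) (a := u ^ (p / 2))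
    (b := v ^ (q / 2)) ((one_le_div hp).2 hp2) (by positivity) (by positivity)
  have hp' : p / 2 * (2 / p) = 1 := by field_simp
  have hq' : q / 2 * (2 - 2 / p) = 1 := by
    field_simp
    linear_combination hpq.sub_one_mul_conj
  rwa [← Real.rpow_mul hu, ← Real.rpow_mul hv, hp', hq', Real.rpow_one, Real.rpow_one] at key

namespace MeasureTheory

variable {X : Type*} [MeasurableSpace X] {μ : Measure X}

lemma MemLp.integral_abs_rpow {f : X → ℝ} {p : ℝ} (hp : 0 < p)
    (hf : MemLp f (ENNReal.ofReal p) μ) :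
    ∫ x, |f x| ^ p ∂μ = (eLpNorm f (ENNReal.ofReal p) μ).toReal ^ p := by
  have hI : 0 ≤ ∫ x, |f x| ^ p ∂μ := integral_nonneg fun x => by positivity
  rw [hf.eLpNorm_eq_integral_rpow_norm (by simpa using hp) ENNReal.ofReal_ne_top,
    ENNReal.toReal_ofReal hp.le]
  simp only [Real.norm_eq_abs]
  rw [ENNReal.toReal_ofReal (by positivity), ← Real.rpow_mul hI, inv_mul_cancel₀ hp.ne',
    Real.rpow_one]

lemma MemLp.toReal_eLpNorm_two_sq {φ : X → ℝ} (hφ : MemLp φ 2 μ) :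
    (eLpNorm φ 2 μ).toReal ^ 2 = ∫ x, φ x ^ 2 ∂μ := by
  have := MemLp.integral_abs_rpow two_pos (by simpa using hφ)
  simp only [Real.rpow_two, sq_abs, ENNReal.ofReal_ofNat] at this
  exact this.symm

lemma MemLp.toReal_eLpNorm_two_sub_sq {φ ψ : X → ℝ} (hφ : MemLp φ 2 μ) (hψ : MemLp ψ 2 μ) :
    (eLpNorm (φ - ψ) 2 μ).toReal ^ 2 =
      ∫ x, φ x ^ 2 ∂μ + ∫ x, ψ x ^ 2 ∂μ - 2 * ∫ x, φ x * ψ x ∂μ := by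
  have hφψ : Integrable (fun x => 2 * (φ x * ψ x)) μ := (hφ.integrable_mul hψ).const_mul 2
  have hsq : Integrable (fun x => φ x ^ 2 + ψ x ^ 2) μ := hφ.integrable_sq.add hψ.integrable_sq
  rw [(hφ.sub hψ).toReal_eLpNorm_two_sq, ← integral_const_mul,
    ← integral_add hφ.integrable_sq hψ.integrable_sq, ← integral_sub hsq hφψ]
  congr 1 with x
  simp only [Pi.sub_apply]
  ring

lemma MemLp.memLp_two_abs_rpow_half_div {f : X → ℝ} {p : ℝ} (hp : 0 < p)
    (hf : MemLp f (ENNReal.ofReal p) μ) (c : ℝ) : MemLp (fun x => |f x| ^ (p / 2) / c) 2 μ := by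
  simp only [div_eq_mul_inv _ c]
  refine MemLp.mul_const ?_ _
  have h2 : ENNReal.ofReal p / ENNReal.ofReal (p / 2) = 2 := by
    rw [← ENNReal.ofReal_div_of_pos (by positivity), div_div_cancel₀ hp.ne']
    norm_num
  simpa [h2, ENNReal.toReal_ofReal (by positivity : 0 ≤ p / 2), Real.norm_eq_abs] using
    hf.norm_rpow_div (ENNReal.ofReal (p / 2))

lemma MemLp.integral_sq_abs_rpow_half_div {f : X → ℝ} {p : ℝ} (hp : 0 < p)
    (hf : MemLp f (ENNReal.ofReal p) μ) (hf0 : 0 < (eLpNorm f (ENNReal.ofReal p) μ).toReal) :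
    ∫ x, (|f x| ^ (p / 2) / (eLpNorm f (ENNReal.ofReal p) μ).toReal ^ (p / 2)) ^ 2 ∂μ = 1 := by
  have sq_half : ∀ a : ℝ, 0 ≤ a → (a ^ (p / 2)) ^ 2 = a ^ p := fun a ha => by
    rw [← Real.rpow_natCast, ← Real.rpow_mul ha]; norm_num
  simp_rw [div_pow, sq_half _ (abs_nonneg _), sq_half _ hf0.le]
  rw [integral_div, hf.integral_abs_rpow hp, div_self (by positivity)]

end MeasureTheory

theorem stmt_5 {X : Type*} [MeasurableSpace X] (μ : Measure X)
    (p q : ℝ) (hp1 : 1 < p) (hp2 : p ≤ 2) (hq : q = p / (p - 1))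
    (f g : X → ℝ)
    (hf : MemLp f (ENNReal.ofReal p) μ) (hg : MemLp g (ENNReal.ofReal q) μ)
    (hf0 : 0 < (eLpNorm f (ENNReal.ofReal p) μ).toReal)
    (hg0 : 0 < (eLpNorm g (ENNReal.ofReal q) μ).toReal) :
    (eLpNorm f (ENNReal.ofReal p) μ).toReal * (eLpNorm g (ENNReal.ofReal q) μ).toReal *
        (1 - (1 / p) *
          (eLpNorm (fun x =>
              |f x| ^ (p / 2) / (eLpNorm f (ENNReal.ofReal p) μ).toReal ^ (p / 2) -
              |g x| ^ (q / 2) / (eLpNorm g (ENNReal.ofReal q) μ).toReal ^ (q / 2)) 2 μ).toReal ^ 2) ≤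
      (eLpNorm (fun x => f x * g x) 1 μ).toReal := by
  have hpq : p.HolderConjugate q := hq ▸ Real.HolderConjugate.conjExponent hp1
  set A := (eLpNorm f (ENNReal.ofReal p) μ).toReal
  set B := (eLpNorm g (ENNReal.ofReal q) μ).toReal
  set φ : X → ℝ := fun x => |f x| ^ (p / 2) / A ^ (p / 2)
  set ψ : X → ℝ := fun x => |g x| ^ (q / 2) / B ^ (q / 2)
  have hφ : MemLp φ 2 μ := hf.memLp_two_abs_rpow_half_div hpq.pos _
  have hψ : MemLp ψ 2 μ := hg.memLp_two_abs_rpow_half_div hpq.symm.pos _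
  have hfg : Integrable (fun x => f x * g x) μ :=
    haveI := hpq.ennrealOfReal; hf.integrable_mul hg
  have hpointwise (x : X) :
      (1 - 2 / p) * ψ x ^ 2 + 2 / p * (φ x * ψ x) ≤ |f x * g x| / (A * B) := by
    have := hpq.one_sub_two_div_mul_add_le_mul hp2 (div_nonneg (abs_nonneg (f x)) hf0.le)
      (div_nonneg (abs_nonneg (g x)) hg0.le)
    rw [Real.div_rpow (abs_nonneg _) hf0.le, Real.div_rpow (abs_nonneg _) hg0.le] at this
    rwa [abs_mul, mul_div_mul_comm]
  have hintegral :
      (1 - 2 / p) * ∫ x, ψ x ^ 2 ∂μ + 2 / p * ∫ x, φ x * ψ x ∂μ ≤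
        (∫ x, |f x * g x| ∂μ) / (A * B) := by
    have hψψ : Integrable (fun x => (1 - 2 / p) * ψ x ^ 2) μ := hψ.integrable_sq.const_mul _
    have hφψ : Integrable (fun x => 2 / p * (φ x * ψ x)) μ :=
      (hφ.integrable_mul hψ).const_mul _
    rw [← integral_const_mul, ← integral_const_mul, ← integral_add hψψ hφψ, ← integral_div]
    exact integral_mono (hψψ.add hφψ) (hfg.abs.div_const _) hpointwise
  have hφ1 : ∫ x, φ x ^ 2 ∂μ = 1 := hf.integral_sq_abs_rpow_half_div hpq.pos hf0
  have hψ1 : ∫ x, ψ x ^ 2 ∂μ = 1 := hg.integral_sq_abs_rpow_half_div hpq.symm.pos hg0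
  rw [hψ1, le_div_iff₀ (by positivity)] at hintegral
  rw [toReal_eLpNorm hfg.1, lpNorm_one_eq_integral_norm hfg.1,
    show (fun x => φ x - ψ x) = φ - ψ from rfl, hφ.toReal_eLpNorm_two_sub_sq hψ, hφ1, hψ1]
  linear_combination hintegral
end

section
/- There exist f ∈ L^p[0,1] and g ∈ L^q[0,1] with 1 < p < 2, ‖f‖_p, ‖g‖_q > 0, such that ∫|fg| > ‖f‖_p^{1-p/2}·‖g‖_q^{1-q/2}·∫|f|^{p/2}|g|^{q/2}. Concretely, g ≡ 1 and f = 2·χ_{[0,1/2]} on [0,1] with Lebesgue measure give such an example. -/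
/-!
For `f = c·χ_s` and `g ≡ 1` on a probability space, with `m = μ s`, all quantities are explicit:
`‖f‖_p = |c| m^{1/p}`, `‖g‖_q = 1`, `∫ |f|^{p/2} |g|^{q/2} = |c|^{p/2} m` and `∫ |f g| = |c| m`.
The right-hand side of the refined Hölder inequality with constant `1` is then `|c| m^{1/p + 1/2}`,
which is strictly smaller than `|c| m` as soon as `0 < m < 1` and `p < 2`.
-/

open MeasureTheory

section IndicatorConst

variable {Ω : Type*} [MeasurableSpace Ω] {μ : Measure Ω} {s : Set Ω}

theorem toReal_eLpNorm_indicator_const [IsFiniteMeasure μ] (hs : MeasurableSet s) {p : ENNReal}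
    (hp0 : p ≠ 0) (hp : p ≠ ⊤) (c : ℝ) :
    (eLpNorm (s.indicator fun _ => c) p μ).toReal = |c| * μ.real s ^ (1 / p.toReal) := by
  rw [eLpNorm_indicator_const hs hp0 hp, ENNReal.toReal_mul, ← ENNReal.toReal_rpow]
  simp [measureReal_def]

theorem toReal_eLpNorm_one [IsProbabilityMeasure μ] {p : ENNReal} (hp0 : p ≠ 0) :
    (eLpNorm (fun _ : Ω => (1 : ℝ)) p μ).toReal = 1 := by
  simp [eLpNorm_const _ hp0 (IsProbabilityMeasure.ne_zero μ)]

theorem integral_abs_indicator_const_rpow (hs : MeasurableSet s) (c : ℝ) {r : ℝ} (hr : r ≠ 0) :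
    ∫ x, |s.indicator (fun _ => c) x| ^ r ∂μ = |c| ^ r * μ.real s := by
  have hfun : (fun x => |s.indicator (fun _ => c) x| ^ r) = s.indicator fun _ => |c| ^ r := by
    funext x
    by_cases hx : x ∈ s <;> simp [hx, Real.zero_rpow hr]
  rw [hfun, integral_indicator_const _ hs, smul_eq_mul, mul_comm]

theorem integral_abs_indicator_const (hs : MeasurableSet s) (c : ℝ) :
    ∫ x, |s.indicator (fun _ => c) x| ∂μ = |c| * μ.real s := by
  simpa using integral_abs_indicator_const_rpow (μ := μ) hs c one_ne_zero

theorem integral_abs_indicator_mul_one_gt [IsProbabilityMeasure μ] (hs : MeasurableSet s)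
    (hs0 : 0 < μ.real s) (hs1 : μ.real s < 1) {c : ℝ} (hc : c ≠ 0) {p q : ℝ} (hp0 : 0 < p)
    (hp2 : p < 2) (hq : 0 < q) :
    (eLpNorm (s.indicator fun _ => c) (ENNReal.ofReal p) μ).toReal ^ (1 - p / 2) *
        (eLpNorm (fun _ : Ω => (1 : ℝ)) (ENNReal.ofReal q) μ).toReal ^ (1 - q / 2) *
        ∫ x, |s.indicator (fun _ => c) x| ^ (p / 2) * |(1 : ℝ)| ^ (q / 2) ∂μ <
      ∫ x, |s.indicator (fun _ => c) x * 1| ∂μ := by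
  set m := μ.real s
  have hc' : 0 < |c| := abs_pos.2 hc
  have hexp : 1 < 1 / p + 1 / 2 := by linarith [one_div_lt_one_div_of_lt hp0 hp2]
  rw [toReal_eLpNorm_indicator_const hs (by simpa using hp0) ENNReal.ofReal_ne_top,
    toReal_eLpNorm_one (by simpa using hq), ENNReal.toReal_ofReal hp0.le]
  simp only [abs_one, Real.one_rpow, mul_one]
  rw [integral_abs_indicator_const_rpow hs c (by positivity), integral_abs_indicator_const hs]
  calc (|c| * m ^ (1 / p)) ^ (1 - p / 2) * (|c| ^ (p / 2) * m)
      = |c| * m ^ (1 / p + 1 / 2) := by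
        rw [Real.mul_rpow hc'.le (by positivity), ← Real.rpow_mul hs0.le]
        have hcpow : |c| ^ (1 - p / 2) * |c| ^ (p / 2) = |c| := by
          rw [← Real.rpow_add hc', sub_add_cancel, Real.rpow_one]
        have hmpow : m ^ (1 / p * (1 - p / 2)) * m = m ^ (1 / p + 1 / 2) := by
          rw [← Real.rpow_add_one hs0.ne']
          congr 1
          field_simp
          ring
        rw [mul_mul_mul_comm, hcpow, hmpow]
    _ < |c| * m ^ (1 : ℝ) :=
        mul_lt_mul_of_pos_left (Real.rpow_lt_rpow_of_exponent_gt hs0 hs1 hexp) hc'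
    _ = |c| * m := by rw [Real.rpow_one]

end IndicatorConst

theorem volume_restrict_Icc_zero_one_real_Icc_zero_half :
    (volume.restrict (Set.Icc (0 : ℝ) 1)).real (Set.Icc 0 (1 / 2)) = 1 / 2 := by
  rw [measureReal_restrict_apply measurableSet_Icc,
    Set.inter_eq_left.2 (Set.Icc_subset_Icc le_rfl (by norm_num)),
    Real.volume_real_Icc_of_le (by norm_num)]
  norm_num

theorem stmt_7 :
    ∃ p q : ℝ, 1 < p ∧ p < 2 ∧ q = p / (p - 1) ∧
      ∃ f g : ℝ → ℝ,
        f = (Set.Icc (0 : ℝ) (1 / 2)).indicator (fun _ => (2 : ℝ)) ∧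
        g = (fun _ => (1 : ℝ)) ∧
        (let μ := volume.restrict (Set.Icc (0 : ℝ) 1);
          MemLp f (ENNReal.ofReal p) μ ∧ MemLp g (ENNReal.ofReal q) μ ∧
          0 < (eLpNorm f (ENNReal.ofReal p) μ).toReal ∧
          0 < (eLpNorm g (ENNReal.ofReal q) μ).toReal ∧
          (eLpNorm f (ENNReal.ofReal p) μ).toReal ^ (1 - p / 2) *
            (eLpNorm g (ENNReal.ofReal q) μ).toReal ^ (1 - q / 2) *
            ∫ x, |f x| ^ (p / 2) * |g x| ^ (q / 2) ∂μ <
          ∫ x, |f x * g x| ∂μ) := by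
  refine ⟨3 / 2, 3, by norm_num, by norm_num, by norm_num, _, _, rfl, rfl, ?_⟩
  intro μ
  have : IsProbabilityMeasure μ := ⟨by simp [μ]⟩
  have hs : MeasurableSet (Set.Icc (0 : ℝ) (1 / 2)) := measurableSet_Icc
  have hmeas := volume_restrict_Icc_zero_one_real_Icc_zero_half
  refine ⟨memLp_indicator_const _ hs 2 (Or.inr (measure_ne_top μ _)), memLp_const 1, ?_, ?_,
    integral_abs_indicator_mul_one_gt hs (by rw [hmeas]; norm_num) (by rw [hmeas]; norm_num)
      two_ne_zero (by norm_num) (by norm_num) (by norm_num)⟩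
  · rw [toReal_eLpNorm_indicator_const hs (by norm_num) ENNReal.ofReal_ne_top, hmeas]
    positivity
  · rw [toReal_eLpNorm_one (by norm_num)]
    exact one_pos
end

section
/- Let (X, μ) be a probability space, 0 < r < s < ∞ with s ≤ 2r, and f ∈ L^s with ‖f‖_s > 0. Then ‖f‖_r ≤ ‖f‖_s·[1 - (2(s-r)/s)·(1 - ‖|f|^{s/2}‖_1/‖|f|^{s/2}‖_2)]^{1/r}. -/
open MeasureTheory
open scoped ENNReal

/-!
Put `α = 2(s - r)/s ∈ (0, 1]`, so that `r = α (s/2) + (1 - α) s`. Hölder's inequality (the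
log-convexity of `p ↦ ∫ |f|^p`) gives `‖f‖_r^r ≤ ‖f‖_{s/2}^{α s/2} ‖f‖_s^{(1-α) s}`. With
`u = ‖|f|^{s/2}‖_1 / ‖|f|^{s/2}‖_2` we have `‖f‖_{s/2}^{s/2} = ‖|f|^{s/2}‖_1 = u ‖f‖_s^{s/2}`, so
the right-hand side is `u^α ‖f‖_s^r`, and the weighted AM-GM inequality `u^α ≤ 1 - α (1 - u)`
concludes.
-/

section Interpolation

variable {X : Type*} [MeasurableSpace X] {μ : Measure X}

theorem lintegral_rpow_convexComb_le {g : X → ℝ≥0∞} (hg : AEMeasurable g μ) {p q θ : ℝ}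
    (hp : 0 ≤ p) (hq : 0 ≤ q) (hθ₀ : 0 ≤ θ) (hθ₁ : θ ≤ 1) :
    ∫⁻ x, g x ^ (θ * p + (1 - θ) * q) ∂μ ≤
      (∫⁻ x, g x ^ p ∂μ) ^ θ * (∫⁻ x, g x ^ q ∂μ) ^ (1 - θ) := by
  have hsplit (x : X) : g x ^ (θ * p + (1 - θ) * q) = (g x ^ p) ^ θ * (g x ^ q) ^ (1 - θ) := by
    rw [ENNReal.rpow_add_of_nonneg _ _ (by positivity) (mul_nonneg (by linarith) hq),
      ← ENNReal.rpow_mul, ← ENNReal.rpow_mul, mul_comm p, mul_comm q]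
  simp_rw [hsplit]
  exact ENNReal.lintegral_mul_norm_pow_le (hg.pow_const p) (hg.pow_const q) hθ₀ (by linarith)
    (by ring)

theorem eLpNorm_ofReal_rpow_eq_lintegral {E : Type*} [NormedAddCommGroup E] (f : X → E) {p : ℝ}
    (hp : 0 < p) : eLpNorm f (ENNReal.ofReal p) μ ^ p = ∫⁻ x, ‖f x‖ₑ ^ p ∂μ := by
  rw [eLpNorm_eq_eLpNorm' (ENNReal.ofReal_pos.2 hp).ne' ENNReal.ofReal_ne_top,
    ENNReal.toReal_ofReal hp.le, lintegral_rpow_enorm_eq_rpow_eLpNorm' hp]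

theorem eLpNorm_rpow_convexComb_le {E : Type*} [NormedAddCommGroup E] {f : X → E}
    (hf : AEStronglyMeasurable f μ) {p q θ : ℝ} (hp : 0 < p) (hq : 0 < q) (hθ₀ : 0 ≤ θ)
    (hθ₁ : θ ≤ 1) :
    eLpNorm f (ENNReal.ofReal (θ * p + (1 - θ) * q)) μ ^ (θ * p + (1 - θ) * q) ≤
      (eLpNorm f (ENNReal.ofReal p) μ ^ p) ^ θ *
        (eLpNorm f (ENNReal.ofReal q) μ ^ q) ^ (1 - θ) := by
  have hpos : 0 < θ * p + (1 - θ) * q := by rcases le_total p q with h | h <;> nlinarith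
  rw [eLpNorm_ofReal_rpow_eq_lintegral f hpos, eLpNorm_ofReal_rpow_eq_lintegral f hp,
    eLpNorm_ofReal_rpow_eq_lintegral f hq]
  exact lintegral_rpow_convexComb_le hf.enorm hp.le hq.le hθ₀ hθ₁

end Interpolation

theorem Real.rpow_le_one_sub_mul_one_sub {t α : ℝ} (ht : 0 ≤ t) (hα₀ : 0 ≤ α) (hα₁ : α ≤ 1) :
    t ^ α ≤ 1 - α * (1 - t) := by
  have := Real.geom_mean_le_arith_mean2_weighted hα₀ (sub_nonneg.2 hα₁) ht zero_le_one
    (add_sub_cancel α 1)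
  rw [Real.one_rpow, mul_one] at this
  linarith

theorem Real.rpow_mul_rpow_le_rpow_mul_one_sub {a b s α : ℝ} (ha : 0 ≤ a) (hb : 0 < b)
    (hα₀ : 0 ≤ α) (hα₁ : α ≤ 1) :
    a ^ α * (b ^ s) ^ (1 - α) ≤
      b ^ (α * (s / 2) + (1 - α) * s) * (1 - α * (1 - a / b ^ (s / 2))) := by
  have hb' : 0 < b ^ (s / 2) := Real.rpow_pos_of_pos hb _
  set u := a / b ^ (s / 2)
  have hu : 0 ≤ u := div_nonneg ha hb'.le
  calc a ^ α * (b ^ s) ^ (1 - α) = b ^ (α * (s / 2) + (1 - α) * s) * u ^ α := by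
        rw [← div_mul_cancel₀ a hb'.ne', Real.mul_rpow hu hb'.le,
          ← Real.rpow_mul hb.le, ← Real.rpow_mul hb.le, Real.rpow_add hb]
        ring_nf
    _ ≤ b ^ (α * (s / 2) + (1 - α) * s) * (1 - α * (1 - u)) := by
        gcongr
        exact Real.rpow_le_one_sub_mul_one_sub hu hα₀ hα₁

theorem Real.le_mul_rpow_one_div_of_rpow_le {b c r K : ℝ} (hb : 0 < b) (hc : 0 ≤ c)
    (hr : 0 < r) (h : c ^ r ≤ b ^ r * K) : c ≤ b * K ^ (1 / r) :=
  have hK : 0 ≤ K :=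
    nonneg_of_mul_nonneg_right ((Real.rpow_nonneg hc r).trans h) (Real.rpow_pos_of_pos hb r)
  calc c = (c ^ r) ^ (1 / r) := by
        rw [← Real.rpow_mul hc, mul_one_div_cancel hr.ne', Real.rpow_one]
    _ ≤ (b ^ r * K) ^ (1 / r) := by gcongr
    _ = b * K ^ (1 / r) := by
        rw [Real.mul_rpow (by positivity) hK, ← Real.rpow_mul hb.le, mul_one_div_cancel hr.ne',
          Real.rpow_one]

theorem stmt_8_general {X : Type*} [MeasurableSpace X] (μ : Measure X)
    [IsProbabilityMeasure μ] (r s : ℝ) (hr : 0 < r) (hrs : r < s) (hs : s ≤ 2 * r)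
    (f : X → ℝ) (hf : MemLp f (ENNReal.ofReal s) μ) :
    (eLpNorm f (ENNReal.ofReal r) μ).toReal ≤
      (eLpNorm f (ENNReal.ofReal s) μ).toReal *
        (1 - (2 * (s - r) / s) *
          (1 - (eLpNorm (fun x => |f x| ^ (s / 2)) 1 μ).toReal /
                (eLpNorm (fun x => |f x| ^ (s / 2)) 2 μ).toReal)) ^ (1 / r) := by
  have hs₀ : 0 < s := hr.trans hrs
  obtain hNs | hNs := (eLpNorm f (ENNReal.ofReal s) μ).toReal_nonneg.eq_or_lt
  · have hf₀ : f =ᵐ[μ] 0 := (eLpNorm_eq_zero_iff hf.1 (by simpa using hs₀)).1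
      (((ENNReal.toReal_eq_zero_iff _).1 hNs.symm).resolve_right hf.2.ne)
    simp [eLpNorm_congr_ae hf₀]
  set α := 2 * (s - r) / s
  have hα₀ : 0 ≤ α := div_nonneg (by linarith) hs₀.le
  have hα₁ : α ≤ 1 := (div_le_one hs₀).2 (by linarith)
  have hr_eq : r = α * (s / 2) + (1 - α) * s := by simp only [α]; field_simp; ring
  have hN₁ : eLpNorm (fun x => |f x| ^ (s / 2)) 1 μ =
      eLpNorm f (ENNReal.ofReal (s / 2)) μ ^ (s / 2) := by
    simpa using eLpNorm_norm_rpow f (p := 1) (μ := μ) (half_pos hs₀)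
  have hN₂ : eLpNorm (fun x => |f x| ^ (s / 2)) 2 μ =
      eLpNorm f (ENNReal.ofReal s) μ ^ (s / 2) := by
    have h2 : 2 * ENNReal.ofReal (s / 2) = ENNReal.ofReal s := by
      rw [← ENNReal.ofReal_ofNat 2, ← ENNReal.ofReal_mul zero_le_two,
        mul_div_cancel₀ _ two_ne_zero]
    simpa [h2] using eLpNorm_norm_rpow f (p := 2) (μ := μ) (half_pos hs₀)
  have hLyap := eLpNorm_rpow_convexComb_le hf.1 (half_pos hs₀) hs₀ hα₀ hα₁
  rw [← hr_eq, ← hN₁] at hLyap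
  have hN₁_ne_top : eLpNorm (fun x => |f x| ^ (s / 2)) 1 μ ≠ ∞ := by
    rw [hN₁]
    exact ENNReal.rpow_ne_top_of_nonneg (half_pos hs₀).le
      (hf.mono_exponent (ENNReal.ofReal_le_ofReal (by linarith))).eLpNorm_ne_top
  have hLyap_real := ENNReal.toReal_mono (by finiteness) hLyap
  simp only [ENNReal.toReal_mul, ← ENNReal.toReal_rpow] at hLyap_real
  rw [hN₂, ← ENNReal.toReal_rpow]
  refine Real.le_mul_rpow_one_div_of_rpow_le hNs ENNReal.toReal_nonneg hr (hLyap_real.trans ?_)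
  rw [hr_eq]
  exact Real.rpow_mul_rpow_le_rpow_mul_one_sub ENNReal.toReal_nonneg hNs hα₀ hα₁

theorem stmt_8 {X : Type*} [MeasurableSpace X] (μ : Measure X)
    [IsProbabilityMeasure μ] (r s : ℝ) (hr : 0 < r) (hrs : r < s) (hs : s ≤ 2 * r)
    (f : X → ℝ) (hf : MemLp f (ENNReal.ofReal s) μ)
    (hf0 : 0 < (eLpNorm f (ENNReal.ofReal s) μ).toReal) :
    (eLpNorm f (ENNReal.ofReal r) μ).toReal ≤
      (eLpNorm f (ENNReal.ofReal s) μ).toReal *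
        (1 - (2 * (s - r) / s) *
          (1 - (eLpNorm (fun x => |f x| ^ (s / 2)) 1 μ).toReal /
                (eLpNorm (fun x => |f x| ^ (s / 2)) 2 μ).toReal)) ^ (1 / r) :=
  stmt_8_general μ r s hr hrs hs f hf
end

section
/- Let (X, μ) be a probability space, 0 < r < s < ∞ with s ≤ 2r, and f ∈ L^s with ‖f‖_s > 0. Then ‖f‖_s·[max(0, 1 - (2r/s)·(1 - ‖|f|^{s/2}‖_1/‖|f|^{s/2}‖_2))]^{1/r} ≤ ‖f‖_r. -/
/-!
Put `g = |f| ^ (s/2)` and `t = 2r/s ≥ 1`, so that `‖g‖₂ = ‖f‖_s ^ (s/2)` and `‖g‖_t = ‖f‖_r ^ (s/2)`.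
On a probability space `‖g‖₁ ≤ ‖g‖_t`, hence `‖g‖₁ / ‖g‖₂ ≤ c := (‖f‖_r / ‖f‖_s) ^ (s/2)`, and
Bernoulli's inequality `1 - t (1 - c) ≤ c ^ t = (‖f‖_r / ‖f‖_s) ^ r` gives the claim after taking
`r`-th roots.
-/

open MeasureTheory
open scoped ENNReal

lemma one_sub_mul_one_sub_le_rpow {c t : ℝ} (hc : 0 ≤ c) (ht : 1 ≤ t) :
    1 - t * (1 - c) ≤ c ^ t := by
  have h := one_add_mul_self_le_rpow_one_add (s := c - 1) (by linarith) ht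
  rw [add_sub_cancel] at h
  linarith

lemma max_zero_one_sub_mul_one_sub_le_rpow {a c t : ℝ} (hc : 0 ≤ c) (ht : 1 ≤ t)
    (hac : a ≤ c) : max 0 (1 - t * (1 - a)) ≤ c ^ t := by
  refine max_le (by positivity) ?_
  calc 1 - t * (1 - a) ≤ 1 - t * (1 - c) := by nlinarith
    _ ≤ c ^ t := one_sub_mul_one_sub_le_rpow hc ht

lemma mul_max_zero_one_sub_rpow_le {A B G r s : ℝ} (hA : 0 < A) (hB : 0 ≤ B) (hr : 0 < r)
    (hs : 0 < s) (hsr : s ≤ 2 * r) (hG : G ≤ B ^ (s / 2)) :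
    A * (max 0 (1 - 2 * r / s * (1 - G / A ^ (s / 2)))) ^ (1 / r) ≤ B := by
  have hb : 0 ≤ B / A := div_nonneg hB hA.le
  have ht : 1 ≤ 2 * r / s := by rw [le_div_iff₀ hs]; linarith
  have hratio : G / A ^ (s / 2) ≤ (B / A) ^ (s / 2) := by
    rw [Real.div_rpow hB hA.le]
    gcongr
  have hmax := max_zero_one_sub_mul_one_sub_le_rpow (by positivity) ht hratio
  rw [← Real.rpow_mul hb, show s / 2 * (2 * r / s) = r by field_simp] at hmax
  calc A * (max 0 (1 - 2 * r / s * (1 - G / A ^ (s / 2)))) ^ (1 / r)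
      ≤ A * ((B / A) ^ r) ^ (1 / r) := by gcongr
    _ = B := by
      rw [← Real.rpow_mul hb, mul_one_div_cancel hr.ne', Real.rpow_one]
      field_simp

section eLpNorm

variable {α : Type*} [MeasurableSpace α] {μ : Measure α}

lemma eLpNorm_abs_rpow (f : α → ℝ) {q : ℝ} (hq : 0 < q) (p : ℝ≥0∞) :
    eLpNorm (fun x => |f x| ^ q) p μ = eLpNorm f (p * ENNReal.ofReal q) μ ^ q := by
  simpa only [Real.norm_eq_abs] using eLpNorm_norm_rpow (μ := μ) (p := p) f hq

lemma eLpNorm_abs_rpow_one_le [IsProbabilityMeasure μ] {f : α → ℝ}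
    (hf : AEStronglyMeasurable f μ) {q : ℝ} (hq : 0 < q) {p : ℝ≥0∞} (hp : 1 ≤ p) :
    eLpNorm (fun x => |f x| ^ q) 1 μ ≤ eLpNorm f (p * ENNReal.ofReal q) μ ^ q := by
  rw [← eLpNorm_abs_rpow f hq]
  refine eLpNorm_le_eLpNorm_of_exponent_le hp ?_
  exact (Real.continuous_rpow_const hq.le).comp_aestronglyMeasurable hf.norm

end eLpNorm

theorem stmt_9 {X : Type*} [MeasurableSpace X] (μ : Measure X)
    [IsProbabilityMeasure μ] (r s : ℝ) (hr : 0 < r) (hrs : r < s) (hs : s ≤ 2 * r)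
    (f : X → ℝ) (hf : MemLp f (ENNReal.ofReal s) μ)
    (hf0 : 0 < (eLpNorm f (ENNReal.ofReal s) μ).toReal) :
    (eLpNorm f (ENNReal.ofReal s) μ).toReal *
      (max 0 (1 - (2 * r / s) *
        (1 - (eLpNorm (fun x => |f x| ^ (s / 2)) 1 μ).toReal /
              (eLpNorm (fun x => |f x| ^ (s / 2)) 2 μ).toReal))) ^ (1 / r) ≤
    (eLpNorm f (ENNReal.ofReal r) μ).toReal := by
  have hs0 : 0 < s := hr.trans hrs
  have hq : 0 < s / 2 := half_pos hs0
  have hfr : MemLp f (ENNReal.ofReal r) μ :=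
    hf.mono_exponent (ENNReal.ofReal_le_ofReal hrs.le)
  have hnorm2 : (eLpNorm (fun x => |f x| ^ (s / 2)) 2 μ).toReal =
      (eLpNorm f (ENNReal.ofReal s) μ).toReal ^ (s / 2) := by
    rw [eLpNorm_abs_rpow f hq, ← ENNReal.ofReal_ofNat 2, ← ENNReal.ofReal_mul zero_le_two,
      mul_div_cancel₀ s two_ne_zero, ENNReal.toReal_rpow]
  have hnorm1 : (eLpNorm (fun x => |f x| ^ (s / 2)) 1 μ).toReal ≤
      (eLpNorm f (ENNReal.ofReal r) μ).toReal ^ (s / 2) := by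
    have hp : (1 : ℝ≥0∞) ≤ ENNReal.ofReal (2 * r / s) := by
      rw [ENNReal.one_le_ofReal, le_div_iff₀ hs0]; linarith
    have h := eLpNorm_abs_rpow_one_le hf.1 hq hp
    rw [← ENNReal.ofReal_mul (by positivity), show 2 * r / s * (s / 2) = r by field_simp] at h
    rw [ENNReal.toReal_rpow]
    exact ENNReal.toReal_mono (ENNReal.rpow_ne_top_of_nonneg hq.le hfr.eLpNorm_ne_top) h
  rw [hnorm2]
  exact mul_max_zero_one_sub_rpow_le hf0 ENNReal.toReal_nonneg hr hs0 hs hnorm1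
end

section
/- Let (X, μ) be a probability space, 0 < r < s < ∞ with s ≤ 2r, and f ∈ L^s with 0 < ‖f‖_s < ∞. Let V := Var(|f|^{s/2}/‖|f|^{s/2}‖_2) = 1 - (‖|f|^{s/2}‖_1/‖|f|^{s/2}‖_2)². Then ‖f‖_s·[max(0, 1 - (2r/s)·V)]^{1/r} ≤ ‖f‖_r ≤ ‖f‖_s·[1 - ((s-r)/s)·V]^{1/r}. -/
/-!
Write `N p = ‖f‖_p` and `w = N (s/2) / N s ∈ [0, 1]`; since `‖|f|^{s/2}‖₁ = N (s/2) ^ (s/2)` and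
`‖|f|^{s/2}‖₂ = N s ^ (s/2)`, the variance is `V = 1 - w ^ s`.

Lower bound: `N r ≥ N (s/2) = N s · w` by monotonicity of `p ↦ ‖f‖_p` on a probability space, and
`w ^ r ≥ w ^ s ≥ 1 - (2r/s)(1 - w ^ s)` because `w ≤ 1` and `2r/s ≥ 1`.

Upper bound: `1/r = θ/(s/2) + (1-θ)/s` with `θ = (s-r)/r ∈ [0, 1]`, so Hölder's inequality gives
the interpolation estimate `N r ≤ N (s/2) ^ θ · N s ^ (1-θ) = N s · w ^ θ`, and
`w ^ (θ r) = (w ^ s) ^ ((s-r)/s) ≤ 1 - ((s-r)/s)(1 - w ^ s)` is Bernoulli's inequality.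
-/

open MeasureTheory
open scoped ENNReal

section Interpolation

variable {X E : Type*} [MeasurableSpace X] [NormedAddCommGroup E] {μ : Measure X} {f : X → E}

theorem eLpNorm_le_eLpNorm_rpow_mul_eLpNorm_rpow {p q r θ : ℝ} (hp : 0 < p) (hq : 0 < q)
    (hr : 0 < r) (hθ₀ : 0 ≤ θ) (hθ₁ : θ ≤ 1) (hpqr : 1 / r = θ / p + (1 - θ) / q)
    (hf : AEStronglyMeasurable f μ) :
    eLpNorm f (ENNReal.ofReal r) μ ≤
      eLpNorm f (ENNReal.ofReal p) μ ^ θ * eLpNorm f (ENNReal.ofReal q) μ ^ (1 - θ) := by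
  have hθ₁' : 0 ≤ 1 - θ := sub_nonneg.2 hθ₁
  simp only [eLpNorm_eq_lintegral_rpow_enorm_toReal, ENNReal.ofReal_ne_top, ne_eq,
    ENNReal.ofReal_eq_zero, not_le, hp, hq, hr, not_false_eq_true, ENNReal.toReal_ofReal hp.le,
    ENNReal.toReal_ofReal hq.le, ENNReal.toReal_ofReal hr.le, ← ENNReal.rpow_mul]
  set a := θ * r / p with ha
  set b := (1 - θ) * r / q with hb
  have hab : a + b = 1 :=
    calc a + b = r * (1 / r) := by rw [hpqr]; ring
      _ = 1 := by field_simp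
  have hpow : ∀ x, ‖f x‖ₑ ^ r = (‖f x‖ₑ ^ p) ^ a * (‖f x‖ₑ ^ q) ^ b := fun x => by
    rw [← ENNReal.rpow_mul, ← ENNReal.rpow_mul, ← ENNReal.rpow_add_of_nonneg _ _ (by positivity)
      (by positivity)]
    congr 1
    rw [ha, hb]
    field_simp
    ring
  have hHolder : ∫⁻ x, ‖f x‖ₑ ^ r ∂μ ≤
      (∫⁻ x, ‖f x‖ₑ ^ p ∂μ) ^ a * (∫⁻ x, ‖f x‖ₑ ^ q ∂μ) ^ b := by
    simp_rw [hpow]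
    exact ENNReal.lintegral_mul_norm_pow_le (hf.enorm.pow_const p) (hf.enorm.pow_const q)
      (by positivity) (by positivity) hab
  calc (∫⁻ x, ‖f x‖ₑ ^ r ∂μ) ^ (1 / r)
      ≤ ((∫⁻ x, ‖f x‖ₑ ^ p ∂μ) ^ a * (∫⁻ x, ‖f x‖ₑ ^ q ∂μ) ^ b) ^ (1 / r) :=
        ENNReal.rpow_le_rpow hHolder (by positivity)
    _ = _ := by
      rw [ENNReal.mul_rpow_of_nonneg _ _ (by positivity), ← ENNReal.rpow_mul, ← ENNReal.rpow_mul]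
      congr 2
      · rw [ha]; field_simp
      · rw [hb]; field_simp

theorem toReal_eLpNorm_le_rpow_mul_rpow {p q r θ : ℝ} (hp : 0 < p) (hq : 0 < q)
    (hr : 0 < r) (hθ₀ : 0 ≤ θ) (hθ₁ : θ ≤ 1) (hpqr : 1 / r = θ / p + (1 - θ) / q)
    (hfp : MemLp f (ENNReal.ofReal p) μ) (hfq : MemLp f (ENNReal.ofReal q) μ) :
    (eLpNorm f (ENNReal.ofReal r) μ).toReal ≤
      (eLpNorm f (ENNReal.ofReal p) μ).toReal ^ θ *
        (eLpNorm f (ENNReal.ofReal q) μ).toReal ^ (1 - θ) := by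
  have hfin := ENNReal.mul_ne_top (ENNReal.rpow_ne_top_of_nonneg hθ₀ hfp.eLpNorm_ne_top)
    (ENNReal.rpow_ne_top_of_nonneg (sub_nonneg.2 hθ₁) hfq.eLpNorm_ne_top)
  simpa only [ENNReal.toReal_mul, ENNReal.toReal_rpow] using ENNReal.toReal_mono hfin
    (eLpNorm_le_eLpNorm_rpow_mul_eLpNorm_rpow hp hq hr hθ₀ hθ₁ hpqr hfp.1)

theorem toReal_eLpNorm_mono_exponent [IsProbabilityMeasure μ] {p q : ℝ≥0∞}
    (hf : MemLp f q μ) (hpq : p ≤ q) : (eLpNorm f p μ).toReal ≤ (eLpNorm f q μ).toReal :=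
  ENNReal.toReal_mono hf.eLpNorm_ne_top (eLpNorm_le_eLpNorm_of_exponent_le hpq hf.1)

end Interpolation

theorem sq_div_toReal_eLpNorm_abs_rpow_half {X : Type*} [MeasurableSpace X] (μ : Measure X)
    (f : X → ℝ) {s : ℝ} (hs : 0 < s) :
    ((eLpNorm (fun x => |f x| ^ (s / 2)) 1 μ).toReal /
        (eLpNorm (fun x => |f x| ^ (s / 2)) 2 μ).toReal) ^ 2 =
      ((eLpNorm f (ENNReal.ofReal (s / 2)) μ).toReal /
        (eLpNorm f (ENNReal.ofReal s) μ).toReal) ^ s := by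
  have hpow : ∀ p, eLpNorm (fun x => |f x| ^ (s / 2)) p μ =
      eLpNorm f (p * ENNReal.ofReal (s / 2)) μ ^ (s / 2) := fun p => by
    simpa only [Real.norm_eq_abs] using eLpNorm_norm_rpow f (half_pos hs)
  have htwo : (2 : ℝ≥0∞) * ENNReal.ofReal (s / 2) = ENNReal.ofReal s := by
    rw [← ENNReal.ofReal_ofNat 2, ← ENNReal.ofReal_mul zero_le_two, mul_div_cancel₀ s two_ne_zero]
  rw [hpow, hpow, one_mul, htwo, ← ENNReal.toReal_rpow, ← ENNReal.toReal_rpow,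
    ← Real.div_rpow ENNReal.toReal_nonneg ENNReal.toReal_nonneg, ← Real.rpow_natCast,
    ← Real.rpow_mul (div_nonneg ENNReal.toReal_nonneg ENNReal.toReal_nonneg)]
  norm_num

theorem max_zero_one_sub_rpow_le {r s w : ℝ} (hr : 0 < r) (hrs : r ≤ s) (hs : s ≤ 2 * r)
    (hw₀ : 0 ≤ w) (hw₁ : w ≤ 1) : (max 0 (1 - 2 * r / s * (1 - w ^ s))) ^ (1 / r) ≤ w := by
  have hs₀ : 0 < s := hr.trans_le hrs
  have hws : max 0 (1 - 2 * r / s * (1 - w ^ s)) ≤ w ^ r := by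
    refine max_le (by positivity) ?_
    have h₁ : 1 - w ^ s ≤ 2 * r / s * (1 - w ^ s) :=
      le_mul_of_one_le_left (sub_nonneg.2 (Real.rpow_le_one hw₀ hw₁ hs₀.le))
        ((one_le_div hs₀).2 hs)
    have h₂ : w ^ s ≤ w ^ r := Real.rpow_le_rpow_of_exponent_ge' hw₀ hw₁ hr.le hrs
    linarith
  calc _ ≤ (w ^ r) ^ (1 / r) := Real.rpow_le_rpow (le_max_left _ _) hws (by positivity)
    _ = w := by rw [one_div, Real.rpow_rpow_inv hw₀ hr.ne']

theorem rpow_le_one_sub_mul_one_sub_rpow {r s w : ℝ} (hr : 0 < r) (hrs : r ≤ s) (hw₀ : 0 ≤ w) :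
    w ^ ((s - r) / r) ≤ (1 - (s - r) / s * (1 - w ^ s)) ^ (1 / r) := by
  have hs₀ : 0 < s := hr.trans_le hrs
  have hbern : (w ^ s) ^ ((s - r) / s) ≤ 1 - (s - r) / s * (1 - w ^ s) := by
    have := rpow_one_add_le_one_add_mul_self (s := w ^ s - 1)
      (by linarith [Real.rpow_nonneg hw₀ s]) (div_nonneg (sub_nonneg.2 hrs) hs₀.le)
      ((div_le_one hs₀).2 (by linarith))
    convert this using 1 <;> ring_nf
  calc w ^ ((s - r) / r) = ((w ^ s) ^ ((s - r) / s)) ^ (1 / r) := by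
        rw [← Real.rpow_mul hw₀, ← Real.rpow_mul hw₀]
        congr 1
        field_simp
    _ ≤ _ := Real.rpow_le_rpow (by positivity) hbern (by positivity)

theorem rpow_mul_rpow_one_sub_eq_mul_div_rpow {a c θ : ℝ} (ha : 0 ≤ a) (hc : 0 < c) :
    a ^ θ * c ^ (1 - θ) = c * (a / c) ^ θ := by
  rw [Real.div_rpow ha hc.le, Real.rpow_sub hc, Real.rpow_one]
  field_simp

theorem stmt_10 {X : Type*} [MeasurableSpace X] (μ : Measure X)
    [IsProbabilityMeasure μ] (r s : ℝ) (hr : 0 < r) (hrs : r < s) (hs : s ≤ 2 * r)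
    (f : X → ℝ) (hf : MemLp f (ENNReal.ofReal s) μ)
    (hf0 : 0 < (eLpNorm f (ENNReal.ofReal s) μ).toReal)
    (V : ℝ)
    (hV : V = 1 - ((eLpNorm (fun x => |f x| ^ (s / 2)) 1 μ).toReal /
                   (eLpNorm (fun x => |f x| ^ (s / 2)) 2 μ).toReal) ^ 2) :
    (eLpNorm f (ENNReal.ofReal s) μ).toReal *
        (max 0 (1 - (2 * r / s) * V)) ^ (1 / r) ≤
      (eLpNorm f (ENNReal.ofReal r) μ).toReal ∧
    (eLpNorm f (ENNReal.ofReal r) μ).toReal ≤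
      (eLpNorm f (ENNReal.ofReal s) μ).toReal *
        (1 - ((s - r) / s) * V) ^ (1 / r) := by
  have hs₀ : 0 < s := hr.trans hrs
  rw [hV, sq_div_toReal_eLpNorm_abs_rpow_half μ f hs₀]
  set N : ℝ → ℝ := fun p => (eLpNorm f (ENNReal.ofReal p) μ).toReal
  set w := N (s / 2) / N s
  have hf_r : MemLp f (ENNReal.ofReal r) μ := hf.mono_exponent (ENNReal.ofReal_le_ofReal hrs.le)
  have hf_half : MemLp f (ENNReal.ofReal (s / 2)) μ :=
    hf.mono_exponent (ENNReal.ofReal_le_ofReal (by linarith))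
  have hw₀ : 0 ≤ w := div_nonneg ENNReal.toReal_nonneg hf0.le
  have hw₁ : w ≤ 1 :=
    (div_le_one hf0).2 (toReal_eLpNorm_mono_exponent hf (ENNReal.ofReal_le_ofReal (by linarith)))
  constructor
  · calc N s * (max 0 (1 - 2 * r / s * (1 - w ^ s))) ^ (1 / r)
        ≤ N s * w := mul_le_mul_of_nonneg_left
          (max_zero_one_sub_rpow_le hr hrs.le hs hw₀ hw₁) hf0.le
      _ = N (s / 2) := mul_div_cancel₀ _ hf0.ne'
      _ ≤ N r := toReal_eLpNorm_mono_exponent hf_r (ENNReal.ofReal_le_ofReal (by linarith))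
  · calc N r ≤ N (s / 2) ^ ((s - r) / r) * N s ^ (1 - (s - r) / r) :=
          toReal_eLpNorm_le_rpow_mul_rpow (half_pos hs₀) hs₀ hr
            (div_nonneg (sub_nonneg.2 hrs.le) hr.le) ((div_le_one hr).2 (by linarith))
            (by field_simp; ring) hf_half hf
      _ = N s * w ^ ((s - r) / r) :=
        rpow_mul_rpow_one_sub_eq_mul_div_rpow ENNReal.toReal_nonneg hf0
      _ ≤ N s * (1 - (s - r) / s * (1 - w ^ s)) ^ (1 / r) :=
        mul_le_mul_of_nonneg_left (rpow_le_one_sub_mul_one_sub_rpow hr hrs.le hw₀) hf0.le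
end

section
/- Let (X, μ) be a measure space, 0 < p₀ < p < p₁ < ∞, and t ∈ (0,1) defined by 1/p = (1-t)/p₀ + t/p₁. Suppose f ∈ L^{p₀} ∩ L^{p₁}, f not a.e. zero, and p₀/p₁ ≤ 1/t - 1. Then ‖f‖_p ≤ ‖f‖_{p₀}^{1-t}·‖f‖_{p₁}^{t}·[1 - (2tp₀/((1-t)p₁ + tp₀))·(1 - ∫|f|^{(p₀+p₁)/2} / ((∫|f|^{p₀})^{1/2}(∫|f|^{p₁})^{1/2}))]^{1/p}. -/
/-!
Write `g = |f|` and `m = (p₀ + p₁) / 2`. With `α = 2 t p₀ / ((1 - t) p₁ + t p₀)` one has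
`p = α m + (1 - α) p₀`, and `α ≤ 1` is exactly the hypothesis `p₀ / p₁ ≤ 1 / t - 1`. Hölder's
inequality gives `∫ gᵖ ≤ (∫ gᵐ)^α (∫ g^p₀)^(1 - α)`. Writing `∫ gᵐ = S (∫ g^p₀)^(1/2) (∫ g^p₁)^(1/2)`,
Bernoulli's inequality `S^α ≤ 1 - α (1 - S)` turns this into
`∫ gᵖ ≤ (∫ g^p₀)^(1 - α/2) (∫ g^p₁)^(α/2) (1 - α (1 - S))`, and since `(1 - α/2) / p = (1 - t) / p₀`
and `(α/2) / p = t / p₁`, taking `p`-th roots gives the claim.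
-/

open MeasureTheory
open scoped ENNReal

theorem rpow_mul_rpow_le_mul_one_sub_mul {a b c α : ℝ} (ha : 0 < a) (hb : 0 < b) (hc : 0 ≤ c)
    (hα₀ : 0 ≤ α) (hα₁ : α ≤ 1) :
    c ^ α * a ^ (1 - α) ≤
      a ^ (1 - α / 2) * b ^ (α / 2) * (1 - α * (1 - c / (a ^ (1 / 2 : ℝ) * b ^ (1 / 2 : ℝ)))) := by
  set S := c / (a ^ (1 / 2 : ℝ) * b ^ (1 / 2 : ℝ))
  have hS : 0 ≤ S := by positivity
  have hc_eq : c = a ^ (1 / 2 : ℝ) * b ^ (1 / 2 : ℝ) * S := by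
    simp only [S]; field_simp
  have bernoulli : S ^ α ≤ 1 - α * (1 - S) := by
    have h := rpow_one_add_le_one_add_mul_self (s := S - 1) (by linarith) hα₀ hα₁
    rw [add_sub_cancel] at h
    linarith
  calc c ^ α * a ^ (1 - α)
      = a ^ (1 - α / 2) * b ^ (α / 2) * S ^ α := by
        rw [hc_eq, Real.mul_rpow (by positivity) hS, Real.mul_rpow (by positivity) (by positivity),
          ← Real.rpow_mul ha.le, ← Real.rpow_mul hb.le, show α / 2 = 1 / 2 * α by ring,
          show 1 - 1 / 2 * α = 1 / 2 * α + (1 - α) by ring, Real.rpow_add ha]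
        ring
    _ ≤ _ := by gcongr

namespace MeasureTheory

section Interpolation

variable {X : Type*} [MeasurableSpace X] {μ : Measure X} {r s θ : ℝ}

theorem lintegral_rpow_convexComb_le {g : X → ℝ≥0∞} (hg : AEMeasurable g μ)
    (hr : 0 ≤ r) (hs : 0 ≤ s) (hθ₀ : 0 ≤ θ) (hθ₁ : θ ≤ 1) :
    ∫⁻ x, g x ^ (θ * r + (1 - θ) * s) ∂μ ≤
      (∫⁻ x, g x ^ r ∂μ) ^ θ * (∫⁻ x, g x ^ s ∂μ) ^ (1 - θ) := by
  calc ∫⁻ x, g x ^ (θ * r + (1 - θ) * s) ∂μ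
      = ∫⁻ x, (g x ^ r) ^ θ * (g x ^ s) ^ (1 - θ) ∂μ := by
        refine lintegral_congr fun x => ?_
        rw [← ENNReal.rpow_mul, ← ENNReal.rpow_mul, ← ENNReal.rpow_add_of_nonneg _ _
          (mul_nonneg hr hθ₀) (mul_nonneg hs (sub_nonneg.2 hθ₁)), mul_comm r, mul_comm s]
    _ ≤ _ := ENNReal.lintegral_mul_norm_pow_le (hg.pow_const r) (hg.pow_const s) hθ₀
        (sub_nonneg.2 hθ₁) (add_sub_cancel θ 1)

variable {g : X → ℝ}

theorem lintegral_ofReal_rpow_convexComb_le (hg₀ : ∀ x, 0 ≤ g x) (hg : AEMeasurable g μ)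
    (hr : 0 ≤ r) (hs : 0 ≤ s) (hθ₀ : 0 ≤ θ) (hθ₁ : θ ≤ 1)
    (hgr : Integrable (fun x => g x ^ r) μ) (hgs : Integrable (fun x => g x ^ s) μ) :
    ∫⁻ x, ENNReal.ofReal (g x ^ (θ * r + (1 - θ) * s)) ∂μ ≤
      ENNReal.ofReal ((∫ x, g x ^ r ∂μ) ^ θ * (∫ x, g x ^ s ∂μ) ^ (1 - θ)) := by
  have hpow : ∀ e : ℝ, 0 ≤ e →
      ∫⁻ x, ENNReal.ofReal (g x ^ e) ∂μ = ∫⁻ x, ENNReal.ofReal (g x) ^ e ∂μ := fun e he =>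
    lintegral_congr fun x => (ENNReal.ofReal_rpow_of_nonneg (hg₀ x) he).symm
  have hnonneg : ∀ e : ℝ, 0 ≤ᵐ[μ] fun x => g x ^ e := fun e =>
    ae_of_all _ fun x => Real.rpow_nonneg (hg₀ x) e
  have hint : ∀ e : ℝ, 0 ≤ ∫ x, g x ^ e ∂μ := fun e => integral_nonneg_of_ae (hnonneg e)
  rw [ENNReal.ofReal_mul (Real.rpow_nonneg (hint r) θ),
    ← ENNReal.ofReal_rpow_of_nonneg (hint r) hθ₀,
    ← ENNReal.ofReal_rpow_of_nonneg (hint s) (sub_nonneg.2 hθ₁),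
    ofReal_integral_eq_lintegral_ofReal hgr (hnonneg r),
    ofReal_integral_eq_lintegral_ofReal hgs (hnonneg s), hpow _ hr, hpow _ hs,
    hpow _ (by nlinarith)]
  exact lintegral_rpow_convexComb_le hg.ennreal_ofReal hr hs hθ₀ hθ₁

theorem Integrable.rpow_convexComb (hg₀ : ∀ x, 0 ≤ g x) (hg : AEMeasurable g μ)
    (hr : 0 ≤ r) (hs : 0 ≤ s) (hθ₀ : 0 ≤ θ) (hθ₁ : θ ≤ 1)
    (hgr : Integrable (fun x => g x ^ r) μ) (hgs : Integrable (fun x => g x ^ s) μ) :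
    Integrable (fun x => g x ^ (θ * r + (1 - θ) * s)) μ :=
  ⟨(hg.pow_const _).aestronglyMeasurable,
    (hasFiniteIntegral_iff_ofReal (ae_of_all _ fun x => Real.rpow_nonneg (hg₀ x) _)).2 <|
      (lintegral_ofReal_rpow_convexComb_le hg₀ hg hr hs hθ₀ hθ₁ hgr hgs).trans_lt
        ENNReal.ofReal_lt_top⟩

theorem integral_rpow_convexComb_le (hg₀ : ∀ x, 0 ≤ g x) (hg : AEMeasurable g μ)
    (hr : 0 ≤ r) (hs : 0 ≤ s) (hθ₀ : 0 ≤ θ) (hθ₁ : θ ≤ 1)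
    (hgr : Integrable (fun x => g x ^ r) μ) (hgs : Integrable (fun x => g x ^ s) μ) :
    ∫ x, g x ^ (θ * r + (1 - θ) * s) ∂μ ≤
      (∫ x, g x ^ r ∂μ) ^ θ * (∫ x, g x ^ s ∂μ) ^ (1 - θ) := by
  rw [integral_eq_lintegral_of_nonneg_ae (ae_of_all _ fun x => Real.rpow_nonneg (hg₀ x) _)
    (hg.pow_const _).aestronglyMeasurable]
  exact ENNReal.toReal_le_of_le_ofReal
    (mul_nonneg (Real.rpow_nonneg (integral_nonneg fun x => Real.rpow_nonneg (hg₀ x) r) θ)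
      (Real.rpow_nonneg (integral_nonneg fun x => Real.rpow_nonneg (hg₀ x) s) _))
    (lintegral_ofReal_rpow_convexComb_le hg₀ hg hr hs hθ₀ hθ₁ hgr hgs)

end Interpolation

section Refinement

variable {X : Type*} [MeasurableSpace X] {μ : Measure X} {g : X → ℝ} {r s α : ℝ}

theorem integral_rpow_le_mul_one_sub_mul (hg₀ : ∀ x, 0 ≤ g x) (hg : AEMeasurable g μ)
    (hr : 0 ≤ r) (hs : 0 ≤ s) (hα₀ : 0 ≤ α) (hα₁ : α ≤ 1)
    (hgr : Integrable (fun x => g x ^ r) μ) (hgs : Integrable (fun x => g x ^ s) μ)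
    (hgr_pos : 0 < ∫ x, g x ^ r ∂μ) (hgs_pos : 0 < ∫ x, g x ^ s ∂μ) :
    ∫ x, g x ^ ((1 - α / 2) * r + α / 2 * s) ∂μ ≤
      (∫ x, g x ^ r ∂μ) ^ (1 - α / 2) * (∫ x, g x ^ s ∂μ) ^ (α / 2) *
        (1 - α * (1 - (∫ x, g x ^ ((r + s) / 2) ∂μ) /
          ((∫ x, g x ^ r ∂μ) ^ (1 / 2 : ℝ) * (∫ x, g x ^ s ∂μ) ^ (1 / 2 : ℝ)))) := by
  have hmid : (r + s) / 2 = 1 / 2 * r + (1 - 1 / 2) * s := by ring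
  have hgm : Integrable (fun x => g x ^ ((r + s) / 2)) μ := by
    rw [hmid]; exact hgr.rpow_convexComb hg₀ hg hr hs (by norm_num) (by norm_num) hgs
  have hexp : (1 - α / 2) * r + α / 2 * s = α * ((r + s) / 2) + (1 - α) * r := by ring
  calc ∫ x, g x ^ ((1 - α / 2) * r + α / 2 * s) ∂μ
      ≤ (∫ x, g x ^ ((r + s) / 2) ∂μ) ^ α * (∫ x, g x ^ r ∂μ) ^ (1 - α) := by
        rw [hexp]
        exact integral_rpow_convexComb_le hg₀ hg (by linarith) hr hα₀ hα₁ hgm hgr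
    _ ≤ _ := rpow_mul_rpow_le_mul_one_sub_mul hgr_pos hgs_pos
        (integral_nonneg fun x => Real.rpow_nonneg (hg₀ x) _) hα₀ hα₁

end Refinement

section RealValued

variable {X : Type*} [MeasurableSpace X] {μ : Measure X} {f : X → ℝ} {r : ℝ}

theorem MemLp.integrable_abs_rpow (hr : 0 < r) (hf : MemLp f (ENNReal.ofReal r) μ) :
    Integrable (fun x => |f x| ^ r) μ := by
  simpa [Real.norm_eq_abs, ENNReal.toReal_ofReal hr.le] using
    hf.integrable_norm_rpow (by simpa using hr) ENNReal.ofReal_ne_top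

theorem toReal_eLpNorm_ofReal (hr : 0 < r) (hf : AEStronglyMeasurable f μ) :
    (eLpNorm f (ENNReal.ofReal r) μ).toReal = (∫ x, |f x| ^ r ∂μ) ^ (1 / r) := by
  rw [toReal_eLpNorm hf, lpNorm_eq_integral_norm_rpow_toReal (by simpa using hr)
    ENNReal.ofReal_ne_top hf, ENNReal.toReal_ofReal hr.le, one_div]
  simp only [Real.norm_eq_abs]

theorem integral_abs_rpow_pos (hr : 0 < r) (hf : Integrable (fun x => |f x| ^ r) μ)
    (hf₀ : ¬ f =ᵐ[μ] 0) : 0 < ∫ x, |f x| ^ r ∂μ := by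
  refine (integral_nonneg fun x => by positivity).lt_of_ne fun h => hf₀ ?_
  filter_upwards [(integral_eq_zero_iff_of_nonneg (fun x => by positivity) hf).1 h.symm]
    with x hx
  simpa [hr.ne'] using hx

theorem toReal_eLpNorm_le_mul_one_sub_mul {p₀ p₁ p α : ℝ} (h₀ : 0 < p₀) (h₁ : 0 < p₁)
    (hα₀ : 0 ≤ α) (hα₁ : α ≤ 1) (hp : (1 - α / 2) * p₀ + α / 2 * p₁ = p)
    (hf₀ : MemLp f (ENNReal.ofReal p₀) μ) (hf₁ : MemLp f (ENNReal.ofReal p₁) μ)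
    (hf : ¬ f =ᵐ[μ] 0) :
    (eLpNorm f (ENNReal.ofReal p) μ).toReal ≤
      (eLpNorm f (ENNReal.ofReal p₀) μ).toReal ^ ((1 - α / 2) * p₀ / p) *
      (eLpNorm f (ENNReal.ofReal p₁) μ).toReal ^ (α / 2 * p₁ / p) *
      (1 - α * (1 - (∫ x, |f x| ^ ((p₀ + p₁) / 2) ∂μ) /
        ((∫ x, |f x| ^ p₀ ∂μ) ^ (1 / 2 : ℝ) * (∫ x, |f x| ^ p₁ ∂μ) ^ (1 / 2 : ℝ)))) ^ (1 / p) := by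
  have hp_pos : 0 < p := by nlinarith
  have hA := hf₀.integrable_abs_rpow h₀
  have hB := hf₁.integrable_abs_rpow h₁
  have key := integral_rpow_le_mul_one_sub_mul (fun x => abs_nonneg (f x))
    hf₀.aestronglyMeasurable.aemeasurable.abs h₀.le h₁.le hα₀ hα₁ hA hB
    (integral_abs_rpow_pos h₀ hA hf) (integral_abs_rpow_pos h₁ hB hf)
  rw [hp] at key
  simp only [toReal_eLpNorm_ofReal _ hf₀.aestronglyMeasurable, h₀, h₁, hp_pos]
  set A := ∫ x, |f x| ^ p₀ ∂μ
  set B := ∫ x, |f x| ^ p₁ ∂μ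
  set R := 1 - α * (1 - (∫ x, |f x| ^ ((p₀ + p₁) / 2) ∂μ) / (A ^ (1 / 2 : ℝ) * B ^ (1 / 2 : ℝ)))
  have hR : 0 ≤ R := by
    have hS : 0 ≤ (∫ x, |f x| ^ ((p₀ + p₁) / 2) ∂μ) / (A ^ (1 / 2 : ℝ) * B ^ (1 / 2 : ℝ)) := by
      positivity
    nlinarith
  calc (∫ x, |f x| ^ p ∂μ) ^ (1 / p) ≤ (A ^ (1 - α / 2) * B ^ (α / 2) * R) ^ (1 / p) := by
        gcongr
    _ = _ := by
        rw [Real.mul_rpow (by positivity) hR, Real.mul_rpow (by positivity) (by positivity),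
          ← Real.rpow_mul (by positivity), ← Real.rpow_mul (by positivity),
          ← Real.rpow_mul (by positivity), ← Real.rpow_mul (by positivity)]
        congr 3 <;> field_simp

end RealValued

end MeasureTheory

theorem stmt_12 {X : Type*} [MeasurableSpace X] (μ : Measure X)
    (p₀ p p₁ t : ℝ) (h0 : 0 < p₀) (h01 : p₀ < p) (h1 : p < p₁)
    (ht0 : 0 < t) (ht1 : t < 1)
    (hp : 1 / p = (1 - t) / p₀ + t / p₁)
    (f : X → ℝ)
    (hf0 : MemLp f (ENNReal.ofReal p₀) μ) (hf1 : MemLp f (ENNReal.ofReal p₁) μ)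
    (hfne : ¬ f =ᵐ[μ] 0)
    (hratio : p₀ / p₁ ≤ 1 / t - 1) :
    (eLpNorm f (ENNReal.ofReal p) μ).toReal ≤
      (eLpNorm f (ENNReal.ofReal p₀) μ).toReal ^ (1 - t) *
      (eLpNorm f (ENNReal.ofReal p₁) μ).toReal ^ t *
      (1 - (2 * t * p₀ / ((1 - t) * p₁ + t * p₀)) *
        (1 - (∫ x, |f x| ^ ((p₀ + p₁) / 2) ∂μ) /
              ((∫ x, |f x| ^ p₀ ∂μ) ^ (1 / 2 : ℝ) * (∫ x, |f x| ^ p₁ ∂μ) ^ (1 / 2 : ℝ)))) ^ (1 / p) := by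
  have hp_pos : 0 < p := h0.trans h01
  have hp₁_pos : 0 < p₁ := hp_pos.trans h1
  have hD : 0 < (1 - t) * p₁ + t * p₀ := by nlinarith
  field_simp at hp hratio
  set α := 2 * t * p₀ / ((1 - t) * p₁ + t * p₀) with hα_def
  have hα₀ : 0 ≤ α := div_nonneg (by positivity) hD.le
  have hα₁ : α ≤ 1 := by rw [hα_def, div_le_one hD]; linarith
  have hw₀ : (1 - α / 2) * p₀ = (1 - t) * p := by
    rw [hα_def]; field_simp; linear_combination (1 - t) * hp
  have hw₁ : α / 2 * p₁ = t * p := by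
    rw [hα_def]; field_simp; linear_combination hp
  have hp_mix : (1 - α / 2) * p₀ + α / 2 * p₁ = p := by linear_combination hw₀ + hw₁
  have h := toReal_eLpNorm_le_mul_one_sub_mul h0 hp₁_pos hα₀ hα₁ hp_mix hf0 hf1 hfne
  rwa [hw₀, hw₁, mul_div_cancel_right₀ _ hp_pos.ne', mul_div_cancel_right₀ _ hp_pos.ne'] at h
end

section
/- Let 1 < r < s < ∞ and let f, h be nonnegative functions in L^r with ‖f‖_r = ‖h‖_r = 1. Then ‖f^{r/s} - h^{r/s}‖_s ≤ ‖f - h‖_r^{r/s}. -/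
/-! The Mazur map estimate holds pointwise: for `0 ≤ θ ≤ 1` the map `t ↦ t ^ θ` on `[0, ∞)` is
`θ`-Hölder with constant `1`, by subadditivity of `t ↦ t ^ θ`. Raising to the power `s` turns
`|f - h| ^ (r / s)` into `|f - h| ^ r`, so the `L^s` norm of the left side is bounded by
`‖f - h‖_r ^ (r / s)`. -/

open MeasureTheory
open scoped ENNReal

namespace Real

theorem rpow_sub_rpow_le_rpow_sub {a b θ : ℝ} (hb : 0 ≤ b) (hba : b ≤ a) (hθ0 : 0 ≤ θ)
    (hθ1 : θ ≤ 1) : a ^ θ - b ^ θ ≤ (a - b) ^ θ := by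
  have := rpow_add_le_add_rpow (sub_nonneg.2 hba) hb hθ0 hθ1
  rw [sub_add_cancel] at this
  linarith

theorem abs_rpow_sub_rpow_le {a b θ : ℝ} (ha : 0 ≤ a) (hb : 0 ≤ b) (hθ0 : 0 ≤ θ)
    (hθ1 : θ ≤ 1) : |a ^ θ - b ^ θ| ≤ |a - b| ^ θ := by
  wlog hba : b ≤ a generalizing a b
  · rw [abs_sub_comm, abs_sub_comm a]
    exact this hb ha (le_of_not_ge hba)
  rw [abs_of_nonneg (sub_nonneg.2 hba),
    abs_of_nonneg (sub_nonneg.2 (rpow_le_rpow hb hba hθ0))]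
  exact rpow_sub_rpow_le_rpow_sub hb hba hθ0 hθ1

end Real

theorem MeasureTheory.eLpNorm_rpow_sub_rpow_le {X : Type*} [MeasurableSpace X] (μ : Measure X)
    {f h : X → ℝ} (hf : ∀ x, 0 ≤ f x) (hh : ∀ x, 0 ≤ h x) {θ : ℝ} (hθ0 : 0 < θ) (hθ1 : θ ≤ 1)
    (p : ℝ≥0∞) :
    eLpNorm (fun x => f x ^ θ - h x ^ θ) p μ ≤ eLpNorm (f - h) (p * ENNReal.ofReal θ) μ ^ θ := by
  rw [← eLpNorm_norm_rpow _ hθ0]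
  exact eLpNorm_mono_real fun x => Real.abs_rpow_sub_rpow_le (hf x) (hh x) hθ0.le hθ1

theorem stmt_13_general {X : Type*} [MeasurableSpace X] (μ : Measure X)
    (r s : ℝ) (hr : 1 < r) (hrs : r < s)
    (f h : X → ℝ) (hfpos : ∀ x, 0 ≤ f x) (hhpos : ∀ x, 0 ≤ h x)
    (hf : MemLp f (ENNReal.ofReal r) μ) (hh : MemLp h (ENNReal.ofReal r) μ) :
    (eLpNorm (fun x => f x ^ (r / s) - h x ^ (r / s)) (ENNReal.ofReal s) μ).toReal ≤
      (eLpNorm (f - h) (ENNReal.ofReal r) μ).toReal ^ (r / s) := by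
  have hr0 : 0 < r := by linarith
  have hs0 : 0 < s := by linarith
  have hθ0 : 0 < r / s := div_pos hr0 hs0
  have hθ1 : r / s ≤ 1 := (div_le_one hs0).2 hrs.le
  have hexp : ENNReal.ofReal s * ENNReal.ofReal (r / s) = ENNReal.ofReal r := by
    rw [← ENNReal.ofReal_mul hs0.le, mul_div_cancel₀ r hs0.ne']
  have key := eLpNorm_rpow_sub_rpow_le μ hfpos hhpos hθ0 hθ1 (ENNReal.ofReal s)
  rw [hexp] at key
  calc (eLpNorm (fun x => f x ^ (r / s) - h x ^ (r / s)) (ENNReal.ofReal s) μ).toReal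
      ≤ (eLpNorm (f - h) (ENNReal.ofReal r) μ ^ (r / s)).toReal :=
        ENNReal.toReal_mono (ENNReal.rpow_ne_top_of_nonneg hθ0.le (hf.sub hh).eLpNorm_ne_top) key
    _ = (eLpNorm (f - h) (ENNReal.ofReal r) μ).toReal ^ (r / s) := (ENNReal.toReal_rpow _ _).symm

theorem stmt_13 {X : Type*} [MeasurableSpace X] (μ : Measure X)
    (r s : ℝ) (hr : 1 < r) (hrs : r < s)
    (f h : X → ℝ) (hfpos : ∀ x, 0 ≤ f x) (hhpos : ∀ x, 0 ≤ h x)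
    (hf : MemLp f (ENNReal.ofReal r) μ) (hh : MemLp h (ENNReal.ofReal r) μ)
    (hf1 : (eLpNorm f (ENNReal.ofReal r) μ).toReal = 1)
    (hh1 : (eLpNorm h (ENNReal.ofReal r) μ).toReal = 1) :
    (eLpNorm (fun x => f x ^ (r / s) - h x ^ (r / s)) (ENNReal.ofReal s) μ).toReal ≤
      (eLpNorm (f - h) (ENNReal.ofReal r) μ).toReal ^ (r / s) :=
  stmt_13_general μ r s hr hrs f h hfpos hhpos hf hh
end

section
/- For complex numbers a, b with a real and a ≥ 0, and p ≥ 2, one has |a + b|^p + |a - b|^p ≤ (a + |b|)^p + |a - |b||^p. -/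
/-!
In a real inner product space, `‖x ± y‖² = s ± t` and `(‖x‖ + ‖y‖)² = s + u`, `(‖x‖ - ‖y‖)² = s - u`
with `s = ‖x‖² + ‖y‖²`, `t = 2⟪x, y⟫`, `u = 2‖x‖‖y‖`, and `|t| ≤ u ≤ s` by Cauchy–Schwarz and AM-GM.
For a convex `f`, `f (s + t) + f (s - t)` only grows as `|t|` grows to `u`; apply this to `r ↦ r ^ (p / 2)`,
which is convex for `p ≥ 2`.
-/

open Set RealInnerProductSpace

theorem ConvexOn.map_add_add_map_sub_le {D : Set ℝ} {f : ℝ → ℝ} (hf : ConvexOn ℝ D f)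
    {s t u : ℝ} (hadd : s + u ∈ D) (hsub : s - u ∈ D) (htu : |t| ≤ u) :
    f (s + t) + f (s - t) ≤ f (s + u) + f (s - u) := by
  obtain ⟨htl, htr⟩ := abs_le.mp htu
  rcases (abs_nonneg t |>.trans htu).eq_or_lt with rfl | hu
  · obtain rfl : t = 0 := by linarith
    exact le_rfl
  -- `s ± t` are the convex combinations of `s ± u` with weights `(u ± t) / 2u`
  set w := (u + t) / (2 * u)
  have hw₀ : 0 ≤ w := div_nonneg (by linarith) (by linarith)
  have hw₁ : 0 ≤ 1 - w := by
    rw [sub_nonneg, div_le_one (by linarith)]; linarith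
  have hadd' := hf.2 hadd hsub hw₀ hw₁ (add_sub_cancel w 1)
  have hsub' := hf.2 hsub hadd hw₀ hw₁ (add_sub_cancel w 1)
  have ht_add : w • (s + u) + (1 - w) • (s - u) = s + t := by
    simp only [w, smul_eq_mul]; field_simp; ring
  have ht_sub : w • (s - u) + (1 - w) • (s + u) = s - t := by
    simp only [w, smul_eq_mul]; field_simp; ring
  rw [ht_add, smul_eq_mul, smul_eq_mul] at hadd'
  rw [ht_sub, smul_eq_mul, smul_eq_mul] at hsub'
  linear_combination hadd' + hsub'

theorem Real.rpow_eq_sq_rpow_half {x : ℝ} (hx : 0 ≤ x) (p : ℝ) : x ^ p = (x ^ 2) ^ (p / 2) := by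
  rw [← Real.rpow_natCast, ← Real.rpow_mul hx]
  ring_nf

theorem norm_add_rpow_add_norm_sub_rpow_le {E : Type*} [NormedAddCommGroup E]
    [InnerProductSpace ℝ E] (x y : E) {p : ℝ} (hp : 2 ≤ p) :
    ‖x + y‖ ^ p + ‖x - y‖ ^ p ≤ (‖x‖ + ‖y‖) ^ p + |‖x‖ - ‖y‖| ^ p := by
  have hconv : ConvexOn ℝ (Ici 0) (fun r : ℝ => r ^ (p / 2)) := convexOn_rpow (by linarith)
  have hadd : ‖x‖ ^ 2 + ‖y‖ ^ 2 + 2 * (‖x‖ * ‖y‖) ∈ Ici 0 := by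
    rw [mem_Ici]; positivity
  have hsub : ‖x‖ ^ 2 + ‖y‖ ^ 2 - 2 * (‖x‖ * ‖y‖) ∈ Ici 0 := by
    rw [mem_Ici]; nlinarith [sq_nonneg (‖x‖ - ‖y‖)]
  have hinner : |2 * ⟪x, y⟫| ≤ 2 * (‖x‖ * ‖y‖) := by
    rw [abs_mul, abs_two]; gcongr; exact abs_real_inner_le_norm x y
  have key := hconv.map_add_add_map_sub_le hadd hsub hinner
  simp only [Real.rpow_eq_sq_rpow_half (norm_nonneg _), Real.rpow_eq_sq_rpow_half (abs_nonneg _),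
    Real.rpow_eq_sq_rpow_half (add_nonneg (norm_nonneg x) (norm_nonneg y)), sq_abs,
    norm_add_sq_real, norm_sub_sq_real]
  convert key using 3 <;> ring

theorem stmt_19 (a : ℝ) (ha : 0 ≤ a) (b : ℂ) (p : ℝ) (hp : 2 ≤ p) :
    ‖(a : ℂ) + b‖ ^ p + ‖(a : ℂ) - b‖ ^ p ≤
      (a + ‖b‖) ^ p + |a - ‖b‖| ^ p := by
  simpa only [Complex.norm_of_nonneg ha] using norm_add_rpow_add_norm_sub_rpow_le (a : ℂ) b hp
end
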